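/- Let K be a field, n ≥ 1, and let f = ∑_a α_a x^a and g = ∑_a β_a x^a be irreducible Laurent polynomials in n variables over K such that supp(g) = supp(f) + m₀ for some m₀ ∈ ℤⁿ. Then for every t ∈ (Kˣ)ⁿ the following are equivalent: (i) f divides the twist t*g in K[x₁^{±1},…,x_n^{±1}]; (ii) α_m β_{m'+m₀} t^{m'+m₀} = α_{m'} β_{m+m₀} t^{m+m₀} for all m, m' ∈ ℤⁿ. Moreover, when these hold there exists λ ∈ Kˣ with t*g = λ x^{m₀} f. -/

import Mathlib

/-!
If `f * h = t*g`, then `supp (f * h)` is the translate `supp f + m₀`. For the lexicographic order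
on `ℤⁿ`, the largest and smallest exponents of a product are the sums of those of the factors, so
the largest and smallest exponents of `h` both equal `m₀`: `h = c x^{m₀}`. The equations (ii) say
exactly that the coefficients of `t*g`, shifted by `m₀`, are proportional to those of `f`, and
the constant of proportionality is nonzero because `supp (t*g)` is a translate of `supp f`.
-/

open scoped BigOperators

noncomputable section

/-- The ring of Laurent polynomials in variables indexed by `σ` over `K`,
realized as the monoid algebra `K[x₁^{±1},…]` on the exponent group `σ → ℤ`. -/
abbrev LaurentPoly (K : Type*) [CommSemiring K] (σ : Type*) : Type _ :=
  AddMonoidAlgebra K (σ → ℤ)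

variable {K : Type*} [Field K] {σ : Type*} [Fintype σ]

/-- `t ^ a = ∏ i, (t i) ^ (a i)` for a torus point `t ∈ (Kˣ)^σ` and `a ∈ ℤ^σ`. -/
def torusPow (t : σ → Kˣ) (a : σ → ℤ) : K :=
  ∏ i, ((t i ^ a i : Kˣ) : K)

/-- Evaluation of a Laurent polynomial `f = ∑ a α_a x^a` at a point `t` of the
torus: `f(t) = ∑ a α_a t^a`. -/
def laurentEval (f : LaurentPoly K σ) (t : σ → Kˣ) : K :=
  f.coeff.sum fun a c => c * torusPow t a

/-- The twist `t*f = ∑ a α_a t^a x^a` of a Laurent polynomial by a torus point. -/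
def laurentTwist (t : σ → Kˣ) (f : LaurentPoly K σ) : LaurentPoly K σ :=
  AddMonoidAlgebra.ofCoeff (f.coeff.sum fun a c => Finsupp.single a (c * torusPow t a))

/-- The height of a (prime) ideal: the supremum of lengths of chains of prime
ideals strictly contained in it. -/
def idealHeight {R : Type*} [CommRing R] (P : Ideal R) : ℕ∞ :=
  Set.chainHeight {Q : Ideal R | Q.IsPrime ∧ Q < P} (· < ·)

/-- A family of Laurent polynomials meets properly if, for every subset `I` of
the index set, every minimal prime of the ideal generated by the corresponding
subfamily has height `#I`. -/
def MeetsProperly {k : ℕ} (g : Fin k → LaurentPoly K σ) : Prop :=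
  ∀ I : Finset (Fin k), ∀ P ∈ (Ideal.span (g '' ↑I)).minimalPrimes,
    idealHeight P = I.card

namespace Finset

variable {A : Type*} [AddCommMonoid A] [LinearOrder A] [IsOrderedCancelAddMonoid A]

theorem uniqueAdd_max'_max' (s t : Finset A) (hs : s.Nonempty) (ht : t.Nonempty) :
    UniqueAdd s t (s.max' hs) (t.max' ht) := fun _ _ ha hb he =>
  (add_eq_add_iff_eq_and_eq (s.le_max' _ ha) (t.le_max' _ hb)).1 he

theorem uniqueAdd_min'_min' (s t : Finset A) (hs : s.Nonempty) (ht : t.Nonempty) :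
    UniqueAdd s t (s.min' hs) (t.min' ht) := fun _ _ ha hb he =>
  ((add_eq_add_iff_eq_and_eq (s.min'_le _ ha) (t.min'_le _ hb)).1 he.symm).imp Eq.symm Eq.symm

end Finset

namespace AddMonoidAlgebra

theorem add_mem_support_mul_of_uniqueAdd {R A : Type*} [Semiring R] [NoZeroDivisors R] [Add A]
    {p q : R[A]} {a b : A} (ha : a ∈ p.coeff.support) (hb : b ∈ q.coeff.support)
    (h : UniqueAdd p.coeff.support q.coeff.support a b) :
    a + b ∈ (p * q).coeff.support := by
  rw [Finsupp.mem_support_iff, coeff_mul_add_of_uniqueAdd h]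
  exact mul_ne_zero (Finsupp.mem_support_iff.1 ha) (Finsupp.mem_support_iff.1 hb)

section LinearOrder

variable {R A : Type*} [AddCommMonoid A] [LinearOrder A] [IsOrderedCancelAddMonoid A]

theorem eq_single_of_support_mul_eq_map_addRightEmbedding [Semiring R] [NoZeroDivisors R]
    {h f : R[A]} (hf : f ≠ 0) {m₀ : A}
    (hs : (h * f).coeff.support = f.coeff.support.map (addRightEmbedding m₀)) :
    h = single m₀ (h.coeff m₀) := by
  have hfs : f.coeff.support.Nonempty := Finsupp.support_nonempty_iff.2 (coeff_eq_zero.not.2 hf)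
  have hhs : h.coeff.support.Nonempty := by
    rw [← Finset.map_nonempty (f := addRightEmbedding m₀), ← hs] at hfs
    exact Finsupp.support_nonempty_iff.2 fun h0 => by simp [coeff_eq_zero.1 h0] at hfs
  have hmax : h.coeff.support.max' hhs ≤ m₀ := by
    obtain ⟨b, hb, he⟩ := Finset.mem_map.1 <| hs ▸ add_mem_support_mul_of_uniqueAdd
      (h.coeff.support.max'_mem hhs) (f.coeff.support.max'_mem hfs)
      (Finset.uniqueAdd_max'_max' _ _ _ _)
    refine le_of_add_le_add_right (a := f.coeff.support.max' hfs) ?_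
    rw [← he, addRightEmbedding_apply, add_comm m₀]
    exact add_le_add_left (f.coeff.support.le_max' b hb) m₀
  have hmin : m₀ ≤ h.coeff.support.min' hhs := by
    obtain ⟨b, hb, he⟩ := Finset.mem_map.1 <| hs ▸ add_mem_support_mul_of_uniqueAdd
      (h.coeff.support.min'_mem hhs) (f.coeff.support.min'_mem hfs)
      (Finset.uniqueAdd_min'_min' _ _ _ _)
    refine le_of_add_le_add_right (a := f.coeff.support.min' hfs) ?_
    rw [← he, addRightEmbedding_apply, add_comm m₀]
    exact add_le_add_left (f.coeff.support.min'_le b hb) m₀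
  refine coeff_injective (Finsupp.support_subset_singleton.1 fun a ha => ?_)
  exact Finset.mem_singleton.2 <| le_antisymm ((h.coeff.support.le_max' a ha).trans hmax)
    (hmin.trans (h.coeff.support.min'_le a ha))

theorem exists_eq_single_mul_of_dvd [CommSemiring R] [NoZeroDivisors R] {f p : R[A]}
    (hdvd : f ∣ p) {m₀ : A}
    (hs : p.coeff.support = f.coeff.support.map (addRightEmbedding m₀)) :
    ∃ c : R, p = single m₀ c * f := by
  obtain ⟨h, rfl⟩ := hdvd
  rcases eq_or_ne f 0 with rfl | hf
  · exact ⟨0, by simp⟩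
  rw [mul_comm] at hs ⊢
  exact ⟨h.coeff m₀, by rw [← eq_single_of_support_mul_eq_map_addRightEmbedding hf hs]⟩

end LinearOrder

section Field

variable {K A : Type*} [Field K] [AddCommGroup A]

theorem coeff_mul_coeff_add_comm_of_eq_single_mul {f p : K[A]} {m₀ : A} {c : K}
    (hp : p = single m₀ c * f) (m m' : A) :
    f.coeff m * p.coeff (m' + m₀) = f.coeff m' * p.coeff (m + m₀) := by
  simp only [hp, coeff_single_mul_apply, neg_add_cancel_comm_assoc]
  ring

theorem exists_eq_single_mul_of_coeff_mul_coeff_add_comm {f p : K[A]} {m₀ : A}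
    (hs : p.coeff.support = f.coeff.support.map (addRightEmbedding m₀))
    (hcomm : ∀ m m', f.coeff m * p.coeff (m' + m₀) = f.coeff m' * p.coeff (m + m₀)) :
    ∃ l : Kˣ, p = single m₀ (l : K) * f := by
  rcases eq_or_ne f 0 with rfl | hf
  · exact ⟨1, by simpa using hs⟩
  obtain ⟨m, hm⟩ := Finsupp.support_nonempty_iff.2 (coeff_eq_zero.not.2 hf)
  have hpm : p.coeff (m + m₀) ≠ 0 :=
    Finsupp.mem_support_iff.1 (hs ▸ Finset.mem_map_of_mem _ hm)
  have hfm : f.coeff m ≠ 0 := Finsupp.mem_support_iff.1 hm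
  refine ⟨Units.mk0 _ (div_ne_zero hpm hfm), ?_⟩
  ext b
  rw [coeff_single_mul_apply, Units.val_mk0, div_mul_eq_mul_div, eq_div_iff hfm, neg_add_eq_sub]
  have hb := hcomm m (b - m₀)
  rw [sub_add_cancel] at hb
  linear_combination hb

end Field

end AddMonoidAlgebra

section Twist

variable (t : σ → Kˣ)

theorem torusPow_ne_zero (a : σ → ℤ) : torusPow t a ≠ 0 :=
  Finset.prod_ne_zero_iff.2 fun _ _ => Units.ne_zero _

theorem coeff_laurentTwist (f : LaurentPoly K σ) (a : σ → ℤ) :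
    (laurentTwist t f).coeff a = f.coeff a * torusPow t a := by
  classical
  rw [laurentTwist, AddMonoidAlgebra.coeff_ofCoeff, Finsupp.sum_apply, Finsupp.sum]
  simp_rw [Finsupp.single_apply]
  rw [Finset.sum_ite_eq']
  split_ifs with ha
  · rfl
  · rw [Finsupp.notMem_support_iff.1 ha, zero_mul]

theorem support_laurentTwist (f : LaurentPoly K σ) :
    (laurentTwist t f).coeff.support = f.coeff.support := by
  ext a
  simp [coeff_laurentTwist, torusPow_ne_zero]

end Twist

theorem dvd_twist_iff_bad_locus_equations_general
    (K : Type*) [Field K] (n : ℕ)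
    (f g : LaurentPoly K (Fin n))
    (m₀ : Fin n → ℤ) (hsupp : g.coeff.support = f.coeff.support.image (· + m₀)) :
    ∀ t : Fin n → Kˣ,
      (f ∣ laurentTwist t g ↔
        ∀ m m' : Fin n → ℤ,
          f.coeff m * (g.coeff (m' + m₀) * torusPow t (m' + m₀)) =
            f.coeff m' * (g.coeff (m + m₀) * torusPow t (m + m₀))) ∧
      (f ∣ laurentTwist t g →
        ∃ l : Kˣ, laurentTwist t g = AddMonoidAlgebra.single m₀ (l : K) * f) := by
  intro t
  simp only [← coeff_laurentTwist]
  have hs : (laurentTwist t g).coeff.support = f.coeff.support.map (addRightEmbedding m₀) := by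
    rw [support_laurentTwist, hsupp, Finset.map_eq_image]
    rfl
  -- `Lex` is a type synonym, so this is the same algebra, now over a linearly ordered group.
  have equations_of_dvd (hdvd : f ∣ laurentTwist t g) :
      ∀ m m', f.coeff m * (laurentTwist t g).coeff (m' + m₀) =
        f.coeff m' * (laurentTwist t g).coeff (m + m₀) := by
    obtain ⟨_, hc⟩ :=
      AddMonoidAlgebra.exists_eq_single_mul_of_dvd (A := Lex (Fin n → ℤ)) hdvd hs
    exact AddMonoidAlgebra.coeff_mul_coeff_add_comm_of_eq_single_mul hc
  have unit_of_equations := AddMonoidAlgebra.exists_eq_single_mul_of_coeff_mul_coeff_add_comm hs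
  refine ⟨⟨equations_of_dvd, fun h => ?_⟩, fun h => unit_of_equations (equations_of_dvd h)⟩
  obtain ⟨l, hl⟩ := unit_of_equations h
  exact Dvd.intro_left _ hl.symm

/-- For irreducible Laurent polynomials `f`, `g` with
`supp(g) = supp(f) + m₀`, and any torus point `t`, `f` divides the twist `t*g`
iff the equations `α_m β_{m'+m₀} t^{m'+m₀} = α_{m'} β_{m+m₀} t^{m+m₀}` hold for
all `m, m'`; in that case `t*g = λ x^{m₀} f` for some `λ ∈ Kˣ`. -/
theorem dvd_twist_iff_bad_locus_equations
    (K : Type*) [Field K] (n : ℕ) (hn : 1 ≤ n)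
    (f g : LaurentPoly K (Fin n)) (hf : Irreducible f) (hg : Irreducible g)
    (m₀ : Fin n → ℤ) (hsupp : g.coeff.support = f.coeff.support.image (· + m₀)) :
    ∀ t : Fin n → Kˣ,
      (f ∣ laurentTwist t g ↔
        ∀ m m' : Fin n → ℤ,
          f.coeff m * (g.coeff (m' + m₀) * torusPow t (m' + m₀)) =
            f.coeff m' * (g.coeff (m + m₀) * torusPow t (m + m₀))) ∧
      (f ∣ laurentTwist t g →
        ∃ l : Kˣ, laurentTwist t g = AddMonoidAlgebra.single m₀ (l : K) * f) :=
  dvd_twist_iff_bad_locus_equations_general K n f g m₀ hsupp
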